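/- Let T ∈ Tree(N) be an (n,d)-regular rooted tree with n ≥ 2. Then for every non-crossing partition π, the cumulant coefficient is α_{T,π} = (d/(n−1))^{I(π)}, where I(π) is the number of inner blocks of π. -/

import Mathlib

/-- The alternating reduction of a string: replace each maximal run of
consecutive equal letters by a single occurrence of that letter. -/
def red {α : Type*} [DecidableEq α] : List α → List α
  | [] => []
  | [a] => [a]
  | a :: b :: t => if a = b then red (b :: t) else a :: red (b :: t)

/-- A rooted subtree of the tree of alternating strings on alphabet `α`. -/
def IsRootedSubtree {α : Type*} (S : Set (List α)) : Prop :=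
  (∀ s ∈ S, s.Chain' (· ≠ ·)) ∧ [] ∈ S ∧ ∀ s ∈ S, s.tail ∈ S

/-- Partitions of finite subsets of `ℕ` (finite totally ordered sets, up to
isomorphism), given by their set of blocks. -/
abbrev Blocks : Type := Finset (Finset ℕ)

/-- `π` is a non-crossing partition (of its ground set `⋃ π`). -/
def IsNC (π : Blocks) : Prop :=
  (∀ B ∈ π, B.Nonempty) ∧
  (∀ B ∈ π, ∀ C ∈ π, B ≠ C → Disjoint B C) ∧
  (∀ B ∈ π, ∀ C ∈ π, B ≠ C →
    ¬ ∃ i₁ j₁ i₂ j₂ : ℕ, i₁ < j₁ ∧ j₁ < i₂ ∧ i₂ < j₂ ∧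
      i₁ ∈ B ∧ i₂ ∈ B ∧ j₁ ∈ C ∧ j₂ ∈ C)

/-- `V` is nested inside `W`. -/
def NestedIn (V W : Finset ℕ) : Prop :=
  ∃ j ∈ W, ∃ k ∈ W, ∀ x ∈ V, j < x ∧ x < k

/-- `V` is immediately nested inside `W` (an edge of the nesting tree of `π`). -/
def ImmNested (π : Blocks) (V W : Finset ℕ) : Prop :=
  NestedIn V W ∧ ¬ ∃ X ∈ π, NestedIn V X ∧ NestedIn X W

/-- Adjacency of blocks in the nesting tree `graph(π)` (away from the root). -/
def AdjBlocks (π : Blocks) (V W : Finset ℕ) : Prop :=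
  ImmNested π V W ∨ ImmNested π W V

/-- `V` and `W` lie in the same `χ`-component of `π`: they are joined by a path
in `graph(π) ∖ {∅}` all of whose edges join blocks of the same color. -/
def sameComp {N : ℕ} (π : Blocks) (χ : Finset ℕ → Fin N) (V W : Finset ℕ) : Prop :=
  Relation.ReflTransGen
    (fun X Y => X ∈ π ∧ Y ∈ π ∧ AdjBlocks π X Y ∧ χ X = χ Y) V W

open Classical in
noncomputable def component {N : ℕ} (π : Blocks) (χ : Finset ℕ → Fin N)
    (V : Finset ℕ) : Finset (Finset ℕ) :=
  π.filter (fun W => sameComp π χ V W)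

-- The `χ`-components of `π`.
open Classical in
noncomputable def components {N : ℕ} (π : Blocks) (χ : Finset ℕ → Fin N) :
    Finset Blocks :=
  π.image (fun V => component π χ V)

/-- `L` is the chain of `V` in `π`: the list `(V, V₁, …, V_d)` consisting of `V`
followed by all blocks surrounding `V`, each nested in the next. -/
def IsChainList (π : Blocks) (V : Finset ℕ) (L : List (Finset ℕ)) : Prop :=
  L.head? = some V ∧ (∀ W, W ∈ L.tail ↔ W ∈ π ∧ NestedIn V W) ∧
  L.Chain' (fun X Y => NestedIn X Y) ∧ L.Nodup

/-- `χ ∈ X_w(π,T)`: for every block `V`, the alternating reduction of the color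
string along the chain of `V` lies in `T`. -/
def WeaklyCompatible {N : ℕ} (T : Set (List (Fin N))) (π : Blocks)
    (χ : Finset ℕ → Fin N) : Prop :=
  ∀ V ∈ π, ∀ L : List (Finset ℕ), IsChainList π V L → red (L.map χ) ∈ T

/-- Extend a coloring of the blocks of `π` by a junk value. -/
def extendColor {N : ℕ} [NeZero N] (π : Blocks)
    (χ : {V : Finset ℕ // V ∈ π} → Fin N) : Finset ℕ → Fin N :=
  fun W => if h : W ∈ π then χ ⟨W, h⟩ else 0

-- The right-hand side of the fixed-point identity for the cumulant
-- coefficients: `n^{−|π|} Σ_{χ ∈ X_w(π,T)} Π_{χ-components π'} a(π')`.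
open Classical in
noncomputable def cumulantRHS {N : ℕ} [NeZero N] (n : ℕ) (T : Set (List (Fin N)))
    (a : Blocks → ℝ) (π : Blocks) : ℝ :=
  (∑ χ : ({V : Finset ℕ // V ∈ π} → Fin N),
      if WeaklyCompatible T π (extendColor π χ) then
        ∏ τ ∈ components π (extendColor π χ), a τ
      else 0) / (n : ℝ) ^ π.card

/-- `a` is a family of cumulant coefficients for `T`: normalized on one-block
partitions, and satisfying the fixed-point identity for all non-crossing `π`. -/
def SatisfiesFP {N : ℕ} [NeZero N] (n : ℕ) (T : Set (List (Fin N)))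
    (a : Blocks → ℝ) : Prop :=
  (∀ π : Blocks, IsNC π → π.card = 1 → a π = 1) ∧
  (∀ π : Blocks, IsNC π → a π = cumulantRHS n T a π)

/-- Number of inner blocks of `π` (blocks nested inside some other block). -/
noncomputable def innerCount (π : Blocks) : ℕ :=
  {V : Finset ℕ | V ∈ π ∧ ∃ W ∈ π, NestedIn V W}.ncard

/-!
Put `x = d / (n - 1)`, so that `x + d = n * x`. For non-crossing `π`, the weighted count
`Σ_χ Π_{τ} x ^ I(τ)` over weakly compatible colourings `χ` and their components `τ` equals
`n ^ |π| * x ^ I(π)`. To see this, remove a block `V` with nothing nested inside it. If `V` is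
outer, its colour ranges over the `n` children of the root and `V` is a component on its own.
If `V` is inner with parent `W`, its colour either equals that of `W`, and then `V` joins the
component of `W`, which gains one inner block (weight `x`), or it is one of the `d` children of
the reduced colour string of `W` (weight `1`). Together these give `x + d = n * x`.

In the fixed-point equation for `π` with `|π| ≠ 1`, every component other than `π` itself is a
proper sub-partition, so by induction `a` equals `x ^ I` on it. The equation then reduces to
`(n ^ |π| - K) * (a π - x ^ I(π)) = 0`. Here `K` counts the compatible colourings with the single
component `π`. They are constant, so `K ≤ n < n ^ |π|`.
-/

theorem NestedIn.trans {U V W : Finset ℕ} (hUV : NestedIn U V) (hVW : NestedIn V W) :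
    NestedIn U W := by
  obtain ⟨j, hj, k, hk, hUV⟩ := hUV
  obtain ⟨j', hj', k', hk', hVW⟩ := hVW
  exact ⟨j', hj', k', hk', fun x hx =>
    ⟨(hVW j hj).1.trans (hUV x hx).1, (hUV x hx).2.trans (hVW k hk).2⟩⟩

instance : Trans NestedIn NestedIn NestedIn := ⟨NestedIn.trans⟩

theorem NestedIn.asymm {V W : Finset ℕ} (hVW : NestedIn V W) (hWV : NestedIn W V) : False := by
  obtain ⟨j, hj, _, _, hVW⟩ := hVW
  obtain ⟨j', hj', _, _, hWV⟩ := hWV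
  exact lt_asymm (hVW j' hj').1 (hWV j hj).1

theorem NestedIn.irrefl {V : Finset ℕ} (h : NestedIn V V) : False := h.asymm h

theorem NestedIn.min_lt {U V : Finset ℕ} (hU : U.Nonempty) (h : NestedIn U V) :
    V.min < U.min := by
  obtain ⟨j, hj, _, _, h⟩ := h
  rw [← Finset.coe_min' hU]
  exact (Finset.min_le hj).trans_lt (WithTop.coe_lt_coe.mpr (h _ (U.min'_mem hU)).1)

theorem IsNC.subset {π τ : Blocks} (hπ : IsNC π) (hτ : τ ⊆ π) : IsNC τ :=
  ⟨fun B hB => hπ.1 B (hτ hB),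
   fun B hB C hC => hπ.2.1 B (hτ hB) C (hτ hC),
   fun B hB C hC => hπ.2.2 B (hτ hB) C (hτ hC)⟩

/-- If `B` starts before `C` and both surround `V`, then `C` lies between two points of `B`:
otherwise a point of `C` beyond `max B` together with a point of `B` beyond `V` would cross. -/
theorem IsNC.nested_of_min_lt {π : Blocks} (hπ : IsNC π) {V B C : Finset ℕ} (hV : V.Nonempty)
    (hB : B ∈ π) (hC : C ∈ π) (hBC : B ≠ C) (hVB : NestedIn V B) (hVC : NestedIn V C)
    (hB0 : B.Nonempty) (hC0 : C.Nonempty) (hlt : B.min' hB0 < C.min' hC0) :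
    NestedIn C B := by
  refine ⟨B.min' hB0, B.min'_mem hB0, B.max' hB0, B.max'_mem hB0, fun x hx =>
    ⟨hlt.trans_le (C.min'_le x hx), ?_⟩⟩
  have hxB : x ∉ B := Finset.disjoint_right.mp (hπ.2.1 B hB C hC hBC) hx
  by_contra! hmax
  have hmax : B.max' hB0 < x := hmax.lt_of_ne fun h => hxB (h ▸ B.max'_mem hB0)
  obtain ⟨v, hv⟩ := hV
  obtain ⟨_, _, k, hk, hVB⟩ := hVB
  obtain ⟨j', hj', _, _, hVC⟩ := hVC
  exact hπ.2.2 B hB C hC hBC ⟨B.min' hB0, C.min' hC0, k, x, hlt,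
    (C.min'_le j' hj').trans_lt ((hVC v hv).1.trans (hVB v hv).2),
    (B.le_max' k hk).trans_lt hmax, B.min'_mem hB0, hk, C.min'_mem hC0, hx⟩

theorem IsNC.nested_total {π : Blocks} (hπ : IsNC π) {V B C : Finset ℕ} (hV : V.Nonempty)
    (hB : B ∈ π) (hC : C ∈ π) (hBC : B ≠ C) (hVB : NestedIn V B) (hVC : NestedIn V C) :
    NestedIn C B ∨ NestedIn B C := by
  have hB0 := hπ.1 B hB
  have hC0 := hπ.1 C hC
  rcases lt_trichotomy (B.min' hB0) (C.min' hC0) with h | h | h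
  · exact .inl (hπ.nested_of_min_lt hV hB hC hBC hVB hVC hB0 hC0 h)
  · exact absurd (h ▸ C.min'_mem hC0)
      (Finset.disjoint_left.mp (hπ.2.1 B hB C hC hBC) (B.min'_mem hB0))
  · exact .inr (hπ.nested_of_min_lt hV hC hB hBC.symm hVC hVB hC0 hB0 h)

section Reduction

variable {α : Type*} [DecidableEq α]

theorem red_cons (a : α) (l : List α) :
    red (a :: l) = if l.head? = some a then red l else a :: red l := by
  cases l with
  | nil => simp [red]
  | cons b t =>
    by_cases h : a = b
    · subst h; simp [red]
    · simp [red, h, Ne.symm h]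

theorem red_singleton (a : α) : red [a] = [a] := rfl

theorem head?_red : ∀ l : List α, (red l).head? = l.head?
  | [] => rfl
  | [_] => rfl
  | a :: b :: t => by
    rw [red]
    split_ifs with h
    · rw [head?_red (b :: t), h]; rfl
    · rfl

theorem red_eq_singleton {c : α} : ∀ {l : List α}, l ≠ [] → (∀ b ∈ l, b = c) → red l = [c]
  | [], hl, _ => absurd rfl hl
  | [b], _, h => by rw [h b (by simp)]; rfl
  | b :: b' :: t, _, h => by
    rw [red, if_pos ((h b (by simp)).trans (h b' (by simp)).symm)]
    exact red_eq_singleton (by simp) fun x hx => h x (List.mem_cons_of_mem b hx)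

end Reduction

section Chains

variable {π : Blocks} {U V W X : Finset ℕ} {L L₁ L₂ : List (Finset ℕ)}

theorem IsChainList.mem_iff (h : IsChainList π V L) :
    X ∈ L ↔ X = V ∨ X ∈ π ∧ NestedIn V X := by
  obtain ⟨hhead, htail, -, -⟩ := h
  obtain _ | ⟨Y, L⟩ := L
  · simp at hhead
  · obtain rfl : Y = V := by simpa using hhead
    rw [List.mem_cons, ← htail]
    rfl

theorem IsChainList.mem_of_mem (h : IsChainList π V L) (hV : V ∈ π) (hX : X ∈ L) : X ∈ π := by
  obtain rfl | ⟨hX, -⟩ := h.mem_iff.mp hX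
  exacts [hV, hX]

theorem IsChainList.eq (h₁ : IsChainList π V L₁) (h₂ : IsChainList π V L₂) : L₁ = L₂ :=
  ((List.perm_ext_iff_of_nodup h₁.2.2.2 h₂.2.2.2).mpr fun _ => by
      rw [h₁.mem_iff, h₂.mem_iff]).eq_of_pairwise
    (fun _ _ _ _ h h' => (h.asymm h').elim) h₁.2.2.1.pairwise h₂.2.2.1.pairwise

theorem isChainList_singleton (hV : ∀ X ∈ π, ¬ NestedIn V X) : IsChainList π V [V] :=
  ⟨rfl, fun X => by simpa using hV X, List.isChain_singleton V, List.nodup_singleton V⟩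

theorem IsNC.exists_immNested (hπ : IsNC π) (hX : X ∈ π) (hVX : NestedIn V X) :
    ∃ W ∈ π, ImmNested π V W := by
  classical
  obtain ⟨W, hW, hmax⟩ := (π.filter (NestedIn V ·)).exists_max_image Finset.min
    ⟨X, Finset.mem_filter.mpr ⟨hX, hVX⟩⟩
  obtain ⟨hW, hVW⟩ := Finset.mem_filter.mp hW
  refine ⟨W, hW, hVW, fun ⟨Z, hZ, hVZ, hZW⟩ => ?_⟩
  exact (hmax Z (Finset.mem_filter.mpr ⟨hZ, hVZ⟩)).not_gt (hZW.min_lt (hπ.1 Z hZ))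

theorem IsNC.nested_of_immNested (hπ : IsNC π) (hV : V ∈ π) (hW : W ∈ π)
    (himm : ImmNested π V W) (hX : X ∈ π) (hVX : NestedIn V X) (hXW : X ≠ W) :
    NestedIn W X :=
  (hπ.nested_total (hπ.1 V hV) hW hX hXW.symm himm.1 hVX).resolve_left
    fun hXW => himm.2 ⟨X, hX, hVX, hXW⟩

theorem IsNC.immNested_unique (hπ : IsNC π) (hV : V ∈ π) (hW : W ∈ π) (hX : X ∈ π)
    (hVW : ImmNested π V W) (hVX : ImmNested π V X) : X = W := by
  by_contra hXW
  exact hVW.2 ⟨X, hX, hVX.1, hπ.nested_of_immNested hV hX hVX hW hVW.1 (Ne.symm hXW)⟩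

theorem IsChainList.cons (hπ : IsNC π) (hV : V ∈ π) (hW : W ∈ π) (himm : ImmNested π V W)
    (hL : IsChainList π W L) : IsChainList π V (V :: L) := by
  refine ⟨rfl, fun X => ?_, List.isChain_cons.mpr ⟨fun Y hY => ?_, hL.2.2.1⟩,
    List.nodup_cons.mpr ⟨fun hVL => ?_, hL.2.2.2⟩⟩
  · rw [List.tail_cons, hL.mem_iff]
    constructor
    · rintro (rfl | ⟨hX, hWX⟩)
      exacts [⟨hW, himm.1⟩, ⟨hX, himm.1.trans hWX⟩]
    · rintro ⟨hX, hVX⟩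
      by_cases hXW : X = W
      exacts [.inl hXW, .inr ⟨hX, hπ.nested_of_immNested hV hW himm hX hVX hXW⟩]
  · rw [hL.1, Option.mem_some_iff] at hY
    exact hY ▸ himm.1
  · obtain rfl | ⟨-, hWV⟩ := hL.mem_iff.mp hVL
    exacts [himm.1.irrefl, himm.1.asymm hWV]

theorem IsNC.exists_isChainList (hπ : IsNC π) (hV : V ∈ π) : ∃ L, IsChainList π V L := by
  classical
  induction hk : (π.filter (NestedIn V ·)).card using Nat.strong_induction_on
    generalizing V with
  | _ k ih =>
    by_cases hout : ∃ X ∈ π, NestedIn V X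
    · obtain ⟨X, hX, hVX⟩ := hout
      obtain ⟨W, hW, himm⟩ := hπ.exists_immNested hX hVX
      have hlt : (π.filter (NestedIn W ·)).card < k := by
        refine hk ▸ Finset.card_lt_card (Finset.ssubset_iff_of_subset ?_ |>.mpr ?_)
        · intro Y hY
          rw [Finset.mem_filter] at hY ⊢
          exact ⟨hY.1, himm.1.trans hY.2⟩
        · exact ⟨W, Finset.mem_filter.mpr ⟨hW, himm.1⟩,
            fun h => (Finset.mem_filter.mp h).2.irrefl⟩
      obtain ⟨L, hL⟩ := ih _ hlt hW rfl
      exact ⟨V :: L, hL.cons hπ hV hW himm⟩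
    · push Not at hout
      exact ⟨[V], isChainList_singleton hout⟩

open Classical in
/-- Junk value `[]` when `V` has no chain in `π`. -/
noncomputable def blockChain (π : Blocks) (V : Finset ℕ) : List (Finset ℕ) :=
  if h : ∃ L, IsChainList π V L then h.choose else []

theorem IsChainList.blockChain_eq (h : IsChainList π V L) : blockChain π V = L := by
  rw [blockChain, dif_pos ⟨L, h⟩]
  exact (Exists.choose_spec ⟨L, h⟩).eq h

theorem IsNC.isChainList_blockChain (hπ : IsNC π) (hV : V ∈ π) :
    IsChainList π V (blockChain π V) := by
  obtain ⟨L, hL⟩ := hπ.exists_isChainList hV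
  rwa [hL.blockChain_eq]

theorem IsNC.blockChain_ne_nil (hπ : IsNC π) (hV : V ∈ π) : blockChain π V ≠ [] := by
  intro h
  simpa [h] using (hπ.isChainList_blockChain hV).1

theorem IsNC.blockChain_of_immNested (hπ : IsNC π) (hV : V ∈ π) (hW : W ∈ π)
    (himm : ImmNested π V W) : blockChain π V = V :: blockChain π W :=
  ((hπ.isChainList_blockChain hW).cons hπ hV hW himm).blockChain_eq

theorem blockChain_of_forall_not_nestedIn (hV : ∀ X ∈ π, ¬ NestedIn V X) :
    blockChain π V = [V] :=
  (isChainList_singleton hV).blockChain_eq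

def IsLeaf (π : Blocks) (V : Finset ℕ) : Prop := ∀ U ∈ π, ¬ NestedIn U V

theorem IsNC.exists_isLeaf (hπ : IsNC π) (hne : π.Nonempty) : ∃ V ∈ π, IsLeaf π V := by
  obtain ⟨V, hV, hmax⟩ := π.exists_max_image Finset.min hne
  exact ⟨V, hV, fun U hU hUV => (hmax U hU).not_gt (hUV.min_lt (hπ.1 U hU))⟩

theorem IsChainList.erase (hleaf : IsLeaf π V) (hU : U ∈ π.erase V) (h : IsChainList π U L) :
    IsChainList (π.erase V) U L := by
  refine ⟨h.1, fun X => ?_, h.2.2⟩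
  rw [h.2.1, Finset.mem_erase]
  exact ⟨fun ⟨hX, hUX⟩ => ⟨⟨fun hXV => hleaf U (Finset.mem_of_mem_erase hU) (hXV ▸ hUX), hX⟩,
    hUX⟩, fun ⟨⟨_, hX⟩, hUX⟩ => ⟨hX, hUX⟩⟩

theorem IsNC.blockChain_erase (hπ : IsNC π) (hleaf : IsLeaf π V) (hU : U ∈ π.erase V) :
    blockChain (π.erase V) U = blockChain π U :=
  ((hπ.isChainList_blockChain (Finset.mem_of_mem_erase hU)).erase hleaf hU).blockChain_eq

end Chains

section Compatibility

variable {N : ℕ} {T : Set (List (Fin N))} {π : Blocks} {V : Finset ℕ}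

theorem IsNC.weaklyCompatible_iff (hπ : IsNC π) {χ : Finset ℕ → Fin N} :
    WeaklyCompatible T π χ ↔ ∀ V ∈ π, red ((blockChain π V).map χ) ∈ T :=
  ⟨fun h V hV => h V hV _ (hπ.isChainList_blockChain hV),
    fun h V hV _ hL => hL.blockChain_eq ▸ h V hV⟩

theorem weaklyCompatible_congr {χ₁ χ₂ : Finset ℕ → Fin N} (h : ∀ U ∈ π, χ₁ U = χ₂ U) :
    WeaklyCompatible T π χ₁ ↔ WeaklyCompatible T π χ₂ := by
  refine forall₂_congr fun V hV => forall₂_congr fun _ hL => ?_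
  rw [List.map_congr_left fun X hX => h X (hL.mem_of_mem hV hX)]

theorem IsNC.weaklyCompatible_iff_erase (hπ : IsNC π) (hV : V ∈ π) (hleaf : IsLeaf π V)
    {χ : Finset ℕ → Fin N} : WeaklyCompatible T π χ ↔
      WeaklyCompatible T (π.erase V) χ ∧ red ((blockChain π V).map χ) ∈ T := by
  rw [hπ.weaklyCompatible_iff, (hπ.subset (π.erase_subset V)).weaklyCompatible_iff]
  constructor
  · intro h
    exact ⟨fun U hU => hπ.blockChain_erase hleaf hU ▸ h U (Finset.mem_of_mem_erase hU), h V hV⟩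
  · rintro ⟨h, hVT⟩ U hU
    by_cases hUV : U = V
    · exact hUV ▸ hVT
    · have hU' := Finset.mem_erase.mpr ⟨hUV, hU⟩
      exact hπ.blockChain_erase hleaf hU' ▸ h U hU'

end Compatibility

section VertexDeletion

open Relation

variable {α : Type*} {r r' : α → α → Prop} {v w x y : α}

theorem reflTransGen_iff_of_forall_not_rel (hr' : ∀ a b, r' a b ↔ a ≠ v ∧ b ≠ v ∧ r a b)
    (hv : ∀ a, ¬ r a v) (hx : x ≠ v) : ReflTransGen r x y ↔ y ≠ v ∧ ReflTransGen r' x y := by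
  refine ⟨fun h => ?_, fun ⟨_, h⟩ =>
    ReflTransGen.mono (fun a b hab => ((hr' a b).mp hab).2.2) _ _ h⟩
  induction h with
  | refl => exact ⟨hx, .refl⟩
  | @tail b c _ hbc ih =>
    have hc : c ≠ v := fun hc => hv b (hc ▸ hbc)
    exact ⟨hc, ih.2.tail ((hr' b c).mpr ⟨ih.1, hc, hbc⟩)⟩

/-- Paths are projected to `r'` by sending `v` to `w`. -/
theorem reflTransGen_iff_of_pendant [DecidableEq α] (hr' : ∀ a b, r' a b ↔ a ≠ v ∧ b ≠ v ∧ r a b)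
    (hw : w ≠ v) (hwv : r w v) (hv : ∀ a, r v a ∨ r a v → a = w) (hx : x ≠ v) :
    ReflTransGen r x y ↔ ReflTransGen r' x (if y = v then w else y) := by
  constructor
  · intro h
    have hproj : ReflTransGen r' (if x = v then w else x) (if y = v then w else y) := by
      refine ReflTransGen.lift' (fun a => if a = v then w else a) (fun a b hab => ?_) x y h
      by_cases ha : a = v
      · subst ha
        simp [Function.onFun, hv b (.inl hab), ReflTransGen.refl]
      by_cases hb : b = v
      · subst hb
        simp [Function.onFun, hv a (.inr hab), ReflTransGen.refl]
      simpa [Function.onFun, ha, hb] using ReflTransGen.single ((hr' a b).mpr ⟨ha, hb, hab⟩)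
    rwa [if_neg hx] at hproj
  · have hmono := ReflTransGen.mono (fun a b hab => ((hr' a b).mp hab).2.2)
    split_ifs with hy
    · exact fun h => hy ▸ (hmono _ _ h).tail hwv
    · exact hmono _ _

end VertexDeletion

section Components

open Relation

variable {N : ℕ} {π : Blocks} {χ χ₁ χ₂ : Finset ℕ → Fin N} {U V W X Y : Finset ℕ}

def ColorAdj (π : Blocks) (χ : Finset ℕ → Fin N) (X Y : Finset ℕ) : Prop :=
  X ∈ π ∧ Y ∈ π ∧ AdjBlocks π X Y ∧ χ X = χ Y

theorem ColorAdj.symm (h : ColorAdj π χ X Y) : ColorAdj π χ Y X :=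
  ⟨h.2.1, h.1, h.2.2.1.symm, h.2.2.2.symm⟩

theorem sameComp_symm (h : sameComp π χ X Y) : sameComp π χ Y X :=
  ReflTransGen.mono (fun _ _ => ColorAdj.symm) _ _ (reflTransGen_swap.mpr h)

theorem sameComp.color_eq (h : sameComp π χ X Y) : χ X = χ Y := by
  induction h with
  | refl => rfl
  | tail _ hYZ ih => exact ih.trans hYZ.2.2.2

theorem mem_component : Y ∈ component π χ X ↔ Y ∈ π ∧ sameComp π χ X Y := by
  classical
  simp [component]

theorem self_mem_component (hX : X ∈ π) : X ∈ component π χ X :=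
  mem_component.mpr ⟨hX, .refl⟩

theorem component_eq_of_sameComp (h : sameComp π χ X Y) :
    component π χ X = component π χ Y := by
  ext Z
  simp only [mem_component]
  exact and_congr_right fun _ => ⟨(sameComp_symm h).trans, h.trans⟩

theorem mem_components {τ : Blocks} :
    τ ∈ components π χ ↔ ∃ U ∈ π, component π χ U = τ := by
  classical
  simp [components]

theorem subset_of_mem_components {τ : Blocks} (hτ : τ ∈ components π χ) : τ ⊆ π := by
  obtain ⟨U, -, rfl⟩ := mem_components.mp hτ
  exact fun _ hY => (mem_component.mp hY).1

theorem mem_iff_component_eq {τ : Blocks} (hτ : τ ∈ components π χ) (hX : X ∈ π) :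
    X ∈ τ ↔ component π χ X = τ := by
  obtain ⟨U, -, rfl⟩ := mem_components.mp hτ
  exact ⟨fun h => (component_eq_of_sameComp (mem_component.mp h).2).symm,
    fun h => h ▸ self_mem_component hX⟩

theorem components_eq_singleton (h : π ∈ components π χ) : components π χ = {π} := by
  refine Finset.eq_singleton_iff_unique_mem.mpr ⟨h, fun τ hτ => ?_⟩
  obtain ⟨U, hU, rfl⟩ := mem_components.mp hτ
  exact (mem_iff_component_eq h hU).mp hU

theorem color_eq_of_components_eq_singleton (h : components π χ = {π}) (hU : U ∈ π)
    (hV : V ∈ π) : χ V = χ U := by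
  have hcomp : component π χ V = π :=
    Finset.mem_singleton.mp (h ▸ Finset.mem_image_of_mem _ hV)
  have hUV : U ∈ component π χ V := by rw [hcomp]; exact hU
  exact (mem_component.mp hUV).2.color_eq

theorem components_congr (h : ∀ U ∈ π, χ₁ U = χ₂ U) : components π χ₁ = components π χ₂ := by
  have hadj : ColorAdj π χ₁ = ColorAdj π χ₂ := by
    ext X Y
    exact and_congr_right fun hX => and_congr_right fun hY => and_congr_right fun _ => by
      rw [h X hX, h Y hY]
  have hsame : sameComp π χ₁ = sameComp π χ₂ := by
    change ReflTransGen (ColorAdj π χ₁) = ReflTransGen (ColorAdj π χ₂)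
    rw [hadj]
  unfold components component
  rw [hsame]

theorem immNested_erase_iff (hleaf : IsLeaf π V) (hX : X ∈ π) :
    ImmNested (π.erase V) X Y ↔ ImmNested π X Y := by
  refine and_congr_right fun _ => not_congr ⟨fun ⟨Z, hZ, h⟩ => ⟨Z, Finset.mem_of_mem_erase hZ, h⟩,
    fun ⟨Z, hZ, hXZ, hZY⟩ => ⟨Z, Finset.mem_erase.mpr ⟨?_, hZ⟩, hXZ, hZY⟩⟩
  rintro rfl
  exact hleaf X hX hXZ

theorem colorAdj_erase_iff (hleaf : IsLeaf π V) :
    ColorAdj (π.erase V) χ X Y ↔ X ≠ V ∧ Y ≠ V ∧ ColorAdj π χ X Y := by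
  simp only [ColorAdj, AdjBlocks, Finset.mem_erase]
  constructor
  · rintro ⟨⟨hXV, hX⟩, ⟨hYV, hY⟩, hadj, hχ⟩
    rw [immNested_erase_iff hleaf hX, immNested_erase_iff hleaf hY] at hadj
    exact ⟨hXV, hYV, hX, hY, hadj, hχ⟩
  · rintro ⟨hXV, hYV, hX, hY, hadj, hχ⟩
    rw [← immNested_erase_iff hleaf hX, ← immNested_erase_iff hleaf hY] at hadj
    exact ⟨⟨hXV, hX⟩, ⟨hYV, hY⟩, hadj, hχ⟩

theorem components_erase_of_isolated (hV : V ∈ π) (hleaf : IsLeaf π V)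
    (hiso : ∀ Y, ¬ ColorAdj π χ V Y) :
    components π χ = insert {V} (components (π.erase V) χ) := by
  have hsame : ∀ {X Y}, X ≠ V → (sameComp π χ X Y ↔ Y ≠ V ∧ sameComp (π.erase V) χ X Y) :=
    reflTransGen_iff_of_forall_not_rel (fun _ _ => colorAdj_erase_iff hleaf)
      fun Y h => hiso Y (ColorAdj.symm h)
  have hcompV : component π χ V = {V} := by
    ext Y
    rw [mem_component, Finset.mem_singleton]
    refine ⟨fun ⟨_, hVY⟩ => ?_, by rintro rfl; exact ⟨hV, .refl⟩⟩
    by_contra hYV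
    exact ((hsame hYV).mp (sameComp_symm hVY)).1 rfl
  have hcomp : ∀ U ∈ π.erase V, component π χ U = component (π.erase V) χ U := by
    intro U hU
    ext Y
    rw [mem_component, mem_component, hsame (Finset.ne_of_mem_erase hU), Finset.mem_erase]
    tauto
  rw [components, ← Finset.insert_erase hV, Finset.image_insert, Finset.insert_erase hV,
    hcompV, components, Finset.image_congr hcomp]

theorem singleton_notMem_components_erase : {V} ∉ components (π.erase V) χ := fun h =>
  Finset.notMem_erase V π (subset_of_mem_components h (Finset.mem_singleton_self V))

open Classical in
noncomputable def graft (V W : Finset ℕ) (c : Blocks) : Blocks :=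
  if W ∈ c then insert V c else c

theorem mem_graft {c : Blocks} : U ∈ graft V W c ↔ U ∈ c ∨ U = V ∧ W ∈ c := by
  unfold graft
  split_ifs with h <;> simp [h, or_comm]

theorem components_erase_of_pendant (hπ : IsNC π) (hV : V ∈ π) (hleaf : IsLeaf π V)
    (hW : W ∈ π) (himm : ImmNested π V W) (hχ : χ V = χ W) :
    components π χ = (components (π.erase V) χ).image (graft V W) := by
  have hWV : W ≠ V := by rintro rfl; exact himm.1.irrefl
  have hW' : W ∈ π.erase V := Finset.mem_erase.mpr ⟨hWV, hW⟩
  have hVW : ColorAdj π χ V W := ⟨hV, hW, .inl himm, hχ⟩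
  have hsame : ∀ {X Y}, X ≠ V →
      (sameComp π χ X Y ↔ sameComp (π.erase V) χ X (if Y = V then W else Y)) := by
    refine reflTransGen_iff_of_pendant (fun _ _ => colorAdj_erase_iff hleaf) hWV hVW.symm
      fun Y hY => ?_
    obtain ⟨-, hY, hadj, -⟩ : ColorAdj π χ V Y := hY.elim id ColorAdj.symm
    rcases hadj with h | h
    · exact hπ.immNested_unique hV hW hY himm h
    · exact (hleaf Y hY h.1).elim
  have hcomp : ∀ U ∈ π.erase V, component π χ U = graft V W (component (π.erase V) χ U) := by
    intro U hU
    ext Y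
    rw [mem_component, mem_graft, mem_component, mem_component,
      hsame (Finset.ne_of_mem_erase hU)]
    by_cases hYV : Y = V
    · subst hYV
      simp [hV, hW']
    · simp [hYV]
  rw [components, ← Finset.insert_erase hV, Finset.image_insert, Finset.insert_erase hV,
    component_eq_of_sameComp (.single hVW),
    Finset.insert_eq_of_mem (Finset.mem_image_of_mem _ hW'), Finset.image_congr hcomp,
    components, Finset.image_image]
  rfl

end Components

section InnerCount

variable {N : ℕ} {π c : Blocks} {χ : Finset ℕ → Fin N} {V W : Finset ℕ}

open Classical in
theorem innerCount_eq_card_filter (τ : Blocks) :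
    innerCount τ = (τ.filter fun U => ∃ W ∈ τ, NestedIn U W).card := by
  rw [innerCount, ← Set.ncard_coe_finset]
  congr 1
  ext U
  simp

theorem innerCount_empty : innerCount ∅ = 0 := by
  simp [innerCount]

theorem innerCount_singleton (V : Finset ℕ) : innerCount {V} = 0 := by
  classical
  rw [innerCount_eq_card_filter, Finset.card_eq_zero, Finset.filter_eq_empty_iff]
  simp only [Finset.mem_singleton, forall_eq, exists_eq_left]
  exact NestedIn.irrefl

open Classical in
theorem innerCount_insert (hleaf : ∀ U ∈ c, ¬ NestedIn U V) (hV : V ∉ c) :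
    innerCount (insert V c) = innerCount c + if ∃ W ∈ c, NestedIn V W then 1 else 0 := by
  have hinner : ∀ U ∈ insert V c, (∃ W ∈ insert V c, NestedIn U W) ↔ ∃ W ∈ c, NestedIn U W := by
    intro U hU
    rw [Finset.exists_mem_insert, or_iff_right]
    rcases Finset.mem_insert.mp hU with rfl | hU
    exacts [NestedIn.irrefl, hleaf U hU]
  rw [innerCount_eq_card_filter, innerCount_eq_card_filter, Finset.filter_congr hinner,
    Finset.filter_insert]
  split_ifs with h
  · rw [Finset.card_insert_of_notMem fun h' => hV (Finset.mem_filter.mp h').1]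
  · rfl

theorem prod_pow_innerCount_graft {M : Type*} [CommMonoid M] (x : M) (hleaf : IsLeaf π V)
    (hW : W ∈ π.erase V) (hVW : NestedIn V W) :
    ∏ τ ∈ (components (π.erase V) χ).image (graft V W), x ^ innerCount τ =
      x * ∏ τ ∈ components (π.erase V) χ, x ^ innerCount τ := by
  classical
  have hVc : ∀ c ∈ components (π.erase V) χ, V ∉ c := fun c hc h =>
    Finset.notMem_erase V π (subset_of_mem_components hc h)
  have herase : ∀ c ∈ components (π.erase V) χ, (graft V W c).erase V = c := by
    intro c hc
    unfold graft
    split_ifs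
    exacts [Finset.erase_insert (hVc c hc), Finset.erase_eq_of_notMem (hVc c hc)]
  have hinj : Set.InjOn (graft V W) (components (π.erase V) χ) := fun c hc c' hc' h => by
    rw [← herase c hc, h, herase c' hc']
  have hcount : ∀ c ∈ components (π.erase V) χ, innerCount (graft V W c) =
      innerCount c + if W ∈ c then 1 else 0 := by
    intro c hc
    unfold graft
    split_ifs with hWc
    · rw [innerCount_insert (fun U hU => hleaf U (Finset.mem_of_mem_erase
        (subset_of_mem_components hc hU))) (hVc c hc), if_pos ⟨W, hWc, hVW⟩]
    · rfl
  have hfilter : (components (π.erase V) χ).filter (W ∈ ·) = {component (π.erase V) χ W} := by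
    ext c
    rw [Finset.mem_filter, Finset.mem_singleton]
    constructor
    · rintro ⟨hc, hWc⟩
      exact ((mem_iff_component_eq hc hW).mp hWc).symm
    · rintro rfl
      exact ⟨Finset.mem_image_of_mem _ hW, self_mem_component hW⟩
  rw [Finset.prod_image hinj, Finset.prod_congr rfl fun c hc => by rw [hcount c hc, pow_add],
    Finset.prod_mul_distrib, mul_comm]
  simp_rw [pow_ite, pow_one, pow_zero]
  rw [← Finset.prod_filter, hfilter, Finset.prod_singleton]

end InnerCount

section Colorings

variable {N : ℕ} {T : Set (List (Fin N))} {π : Blocks} {V W : Finset ℕ}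

open Classical in
noncomputable def colorWeight (T : Set (List (Fin N))) (g : Blocks → ℝ) (π : Blocks)
    (χ : Finset ℕ → Fin N) : ℝ :=
  if WeaklyCompatible T π χ then ∏ τ ∈ components π χ, g τ else 0

noncomputable def colorSum [NeZero N] (T : Set (List (Fin N))) (g : Blocks → ℝ) (π : Blocks) :
    ℝ :=
  ∑ χ : {V : Finset ℕ // V ∈ π} → Fin N, colorWeight T g π (extendColor π χ)

theorem cumulantRHS_eq_colorSum_div [NeZero N] (n : ℕ) (a : Blocks → ℝ) (π : Blocks) :
    cumulantRHS n T a π = colorSum T a π / (n : ℝ) ^ π.card := rfl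

theorem colorWeight_congr {g : Blocks → ℝ} {χ₁ χ₂ : Finset ℕ → Fin N}
    (h : ∀ U ∈ π, χ₁ U = χ₂ U) : colorWeight T g π χ₁ = colorWeight T g π χ₂ := by
  unfold colorWeight
  rw [weaklyCompatible_congr h, components_congr h]

theorem colorSum_empty [NeZero N] (g : Blocks → ℝ) : colorSum T g ∅ = 1 := by
  have hweight : ∀ χ, colorWeight T g ∅ χ = 1 := fun χ => by
    have hcompat : WeaklyCompatible T ∅ χ := fun V hV => absurd hV (Finset.notMem_empty V)
    rw [colorWeight, if_pos hcompat]
    simp [components]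
  simp [colorSum, hweight]

theorem ncard_setOf_eq_card_filter (P : Fin N → Prop) [DecidablePred P] :
    {c | P c}.ncard = (Finset.univ.filter P).card := by
  rw [← Set.ncard_coe_finset]
  congr
  ext
  simp

noncomputable def coloringEquivErase [NeZero N] (hV : V ∈ π) :
    ({U : Finset ℕ // U ∈ π} → Fin N) ≃ Fin N × ({U : Finset ℕ // U ∈ π.erase V} → Fin N) where
  toFun χ := (χ ⟨V, hV⟩, fun u => χ ⟨u.1, Finset.mem_of_mem_erase u.2⟩)
  invFun p u := Function.update (extendColor (π.erase V) p.2) V p.1 u.1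
  left_inv χ := by
    funext u
    by_cases huV : u.1 = V
    · obtain ⟨U, hU⟩ := u
      subst huV
      simp
    · simp [extendColor, huV, u.2]
  right_inv p := by
    refine Prod.ext (by simp) (funext fun u => ?_)
    simp [Function.update_of_ne (Finset.ne_of_mem_erase u.2), extendColor, u.2]

theorem sum_extendColor_eq_sum_update [NeZero N] {M : Type*} [AddCommMonoid M] (hV : V ∈ π)
    (F : (Finset ℕ → Fin N) → M) (hF : ∀ χ₁ χ₂, (∀ U ∈ π, χ₁ U = χ₂ U) → F χ₁ = F χ₂) :
    ∑ χ : {U : Finset ℕ // U ∈ π} → Fin N, F (extendColor π χ) =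
      ∑ χ : {U : Finset ℕ // U ∈ π.erase V} → Fin N, ∑ c,
        F (Function.update (extendColor (π.erase V) χ) V c) := by
  rw [← (coloringEquivErase hV).symm.sum_comp, Fintype.sum_prod_type_right]
  exact Finset.sum_congr rfl fun χ _ => Finset.sum_congr rfl fun c _ =>
    hF _ _ fun U hU => dif_pos hU

theorem colorWeight_update_erase {g : Blocks → ℝ} (χ : Finset ℕ → Fin N) (c : Fin N) :
    colorWeight T g (π.erase V) (Function.update χ V c) = colorWeight T g (π.erase V) χ :=
  colorWeight_congr fun _ hU => Function.update_of_ne (Finset.ne_of_mem_erase hU) _ _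

end Colorings

section LeafRemoval

open Classical

variable {N : ℕ} {T : Set (List (Fin N))} {π : Blocks} {V W : Finset ℕ}

theorem colorWeight_erase_of_outer (hπ : IsNC π) (hV : V ∈ π) (hleaf : IsLeaf π V)
    (hout : ∀ X ∈ π, ¬ NestedIn V X) (x : ℝ) (χ : Finset ℕ → Fin N) :
    colorWeight T (x ^ innerCount ·) π χ =
      (if [χ V] ∈ T then 1 else 0) * colorWeight T (x ^ innerCount ·) (π.erase V) χ := by
  have hiso : ∀ Y, ¬ ColorAdj π χ V Y := by
    rintro Y ⟨-, hY, hVY | hYV, -⟩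
    exacts [hout Y hY hVY.1, hleaf Y hY hYV.1]
  unfold colorWeight
  rw [hπ.weaklyCompatible_iff_erase hV hleaf, blockChain_of_forall_not_nestedIn hout,
    List.map_singleton, red_singleton, components_erase_of_isolated hV hleaf hiso,
    Finset.prod_insert singleton_notMem_components_erase, innerCount_singleton, pow_zero,
    one_mul]
  split_ifs <;> simp_all

theorem colorWeight_erase_of_immNested (hπ : IsNC π) (hV : V ∈ π) (hleaf : IsLeaf π V)
    (hW : W ∈ π) (himm : ImmNested π V W) (x : ℝ) (χ : Finset ℕ → Fin N) :
    colorWeight T (x ^ innerCount ·) π χ =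
      (if χ V = χ W then x
        else if χ V :: red ((blockChain (π.erase V) W).map χ) ∈ T then 1 else 0) *
        colorWeight T (x ^ innerCount ·) (π.erase V) χ := by
  have hW' : W ∈ π.erase V := Finset.mem_erase.mpr ⟨by rintro rfl; exact himm.1.irrefl, hW⟩
  have hπ' := hπ.subset (π.erase_subset V)
  have hchain : (blockChain π V).map χ = χ V :: (blockChain (π.erase V) W).map χ := by
    rw [hπ.blockChain_of_immNested hV hW himm, hπ.blockChain_erase hleaf hW', List.map_cons]
  have hhead : ((blockChain (π.erase V) W).map χ).head? = some (χ W) := by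
    rw [List.head?_map, (hπ'.isChainList_blockChain hW').1, Option.map_some]
  unfold colorWeight
  rw [hπ.weaklyCompatible_iff_erase hV hleaf, hchain, red_cons, hhead]
  by_cases hχ : χ V = χ W
  · have hWT : WeaklyCompatible T (π.erase V) χ → red ((blockChain (π.erase V) W).map χ) ∈ T :=
      fun h => hπ'.weaklyCompatible_iff.mp h W hW'
    rw [if_pos (congrArg some hχ.symm), if_pos hχ,
      components_erase_of_pendant hπ hV hleaf hW himm hχ,
      prod_pow_innerCount_graft x hleaf hW' himm.1]
    split_ifs <;> simp_all
  · have hiso : ∀ Y, ¬ ColorAdj π χ V Y := by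
      rintro Y ⟨-, hY, hVY | hYV, hχY⟩
      · exact hχ (hπ.immNested_unique hV hW hY himm hVY ▸ hχY)
      · exact hleaf Y hY hYV.1
    rw [if_neg fun h => hχ (Option.some_inj.mp h).symm, if_neg hχ,
      components_erase_of_isolated hV hleaf hiso,
      Finset.prod_insert singleton_notMem_components_erase, innerCount_singleton, pow_zero,
      one_mul]
    split_ifs <;> simp_all

theorem sum_ite_mem_singleton {n : ℕ} (hroot : {j : Fin N | [j] ∈ T}.ncard = n) :
    ∑ c : Fin N, (if [c] ∈ T then (1 : ℝ) else 0) = n := by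
  rw [Finset.sum_boole, ← ncard_setOf_eq_card_filter, hroot]

/-- The colours `c` with `c :: s ∈ T` are the `d` children of `s`; the parent's colour `w` is
not among them since strings in `T` are alternating. -/
theorem sum_ite_cons_mem {d : ℕ} (hT : IsRootedSubtree T)
    (hreg : ∀ s ∈ T, s ≠ [] → {j : Fin N | j :: s ∈ T}.ncard = d)
    {s : List (Fin N)} {w : Fin N} (hs : s ∈ T) (hw : s.head? = some w) (x : ℝ) :
    ∑ c : Fin N, (if c = w then x else if c :: s ∈ T then 1 else 0) = x + d := by
  have hwT : w :: s ∉ T := fun h => by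
    obtain _ | ⟨y, t⟩ := s
    · simp at hw
    · obtain rfl : y = w := by simpa using hw
      exact (List.isChain_cons_cons.mp (hT.1 _ h)).1 rfl
  rw [← Finset.add_sum_erase _ _ (Finset.mem_univ w), if_pos rfl,
    Finset.sum_congr rfl fun c hc => if_neg (Finset.ne_of_mem_erase hc),
    Finset.sum_erase (f := fun c => if c :: s ∈ T then (1 : ℝ) else 0) _ (if_neg hwT),
    Finset.sum_boole, ← ncard_setOf_eq_card_filter,
    hreg s hs (by rintro rfl; simp at hw)]

theorem sum_colorWeight_update_of_outer {n : ℕ} (hroot : {j : Fin N | [j] ∈ T}.ncard = n)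
    (hπ : IsNC π) (hV : V ∈ π) (hleaf : IsLeaf π V) (hout : ∀ X ∈ π, ¬ NestedIn V X) (x : ℝ)
    (χ : Finset ℕ → Fin N) :
    ∑ c, colorWeight T (x ^ innerCount ·) π (Function.update χ V c) =
      n * colorWeight T (x ^ innerCount ·) (π.erase V) χ := by
  simp_rw [colorWeight_erase_of_outer hπ hV hleaf hout, Function.update_self,
    colorWeight_update_erase]
  rw [← Finset.sum_mul, sum_ite_mem_singleton hroot]

theorem sum_colorWeight_update_of_immNested {d : ℕ} (hT : IsRootedSubtree T)
    (hreg : ∀ s ∈ T, s ≠ [] → {j : Fin N | j :: s ∈ T}.ncard = d)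
    (hπ : IsNC π) (hV : V ∈ π) (hleaf : IsLeaf π V) (hW : W ∈ π) (himm : ImmNested π V W)
    (x : ℝ) (χ : Finset ℕ → Fin N) :
    ∑ c, colorWeight T (x ^ innerCount ·) π (Function.update χ V c) =
      (x + d) * colorWeight T (x ^ innerCount ·) (π.erase V) χ := by
  have hW' : W ∈ π.erase V := Finset.mem_erase.mpr ⟨by rintro rfl; exact himm.1.irrefl, hW⟩
  have hπ' := hπ.subset (π.erase_subset V)
  have hchain : ∀ c, (blockChain (π.erase V) W).map (Function.update χ V c) =
      (blockChain (π.erase V) W).map χ := fun c =>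
    List.map_congr_left fun X hX => Function.update_of_ne (Finset.ne_of_mem_erase
      ((hπ'.isChainList_blockChain hW').mem_of_mem hW' hX)) _ _
  simp_rw [colorWeight_erase_of_immNested hπ hV hleaf hW himm, Function.update_self,
    Function.update_of_ne (Finset.ne_of_mem_erase hW'), hchain, colorWeight_update_erase]
  rw [← Finset.sum_mul]
  by_cases hcompat : WeaklyCompatible T (π.erase V) χ
  · have hs := hπ'.weaklyCompatible_iff.mp hcompat W hW'
    have hhead : (red ((blockChain (π.erase V) W).map χ)).head? = some (χ W) := by
      rw [head?_red, List.head?_map, (hπ'.isChainList_blockChain hW').1, Option.map_some]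
    rw [sum_ite_cons_mem hT hreg hs hhead]
  · simp [colorWeight, hcompat]

end LeafRemoval

section CumulantCoefficients

open Classical

variable {N : ℕ} [NeZero N] {T : Set (List (Fin N))} {π : Blocks} {V : Finset ℕ} {n d : ℕ}

theorem innerCount_eq_erase_add (hV : V ∈ π) (hleaf : IsLeaf π V) :
    innerCount π = innerCount (π.erase V) + if ∃ W ∈ π, NestedIn V W then 1 else 0 := by
  conv_lhs => rw [← Finset.insert_erase hV]
  rw [innerCount_insert (fun U hU => hleaf U (Finset.mem_of_mem_erase hU))
    (Finset.notMem_erase V π)]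
  refine congrArg _ (if_congr ⟨fun ⟨W, hW, hVW⟩ => ⟨W, Finset.mem_of_mem_erase hW, hVW⟩,
    fun ⟨W, hW, hVW⟩ => ⟨W, Finset.mem_erase.mpr ⟨?_, hW⟩, hVW⟩⟩ rfl rfl)
  rintro rfl
  exact hVW.irrefl

theorem colorSum_pow_innerCount (hT : IsRootedSubtree T)
    (hroot : {j : Fin N | [j] ∈ T}.ncard = n)
    (hreg : ∀ s ∈ T, s ≠ [] → {j : Fin N | j :: s ∈ T}.ncard = d)
    {x : ℝ} (hx : x + d = n * x) (hπ : IsNC π) :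
    colorSum T (x ^ innerCount ·) π = (n : ℝ) ^ π.card * x ^ innerCount π := by
  induction π using Finset.strongInduction with
  | H π ih =>
  obtain rfl | hne := π.eq_empty_or_nonempty
  · simp [colorSum_empty, innerCount_empty]
  obtain ⟨V, hV, hleaf⟩ := hπ.exists_isLeaf hne
  have hπ' := hπ.subset (π.erase_subset V)
  have hsplit := sum_extendColor_eq_sum_update hV (colorWeight T (x ^ innerCount ·) π)
    fun _ _ => colorWeight_congr
  have hrec := ih _ (Finset.erase_ssubset hV) hπ'
  rw [colorSum] at hrec ⊢
  rw [hsplit, innerCount_eq_erase_add hV hleaf, ← Finset.card_erase_add_one hV]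
  by_cases hin : ∃ W ∈ π, NestedIn V W
  · obtain ⟨X, hX, hVX⟩ := hin
    obtain ⟨W, hW, himm⟩ := hπ.exists_immNested hX hVX
    simp_rw [sum_colorWeight_update_of_immNested hT hreg hπ hV hleaf hW himm]
    rw [← Finset.mul_sum, hrec, if_pos ⟨X, hX, hVX⟩, hx]
    ring
  · push Not at hin
    simp_rw [sum_colorWeight_update_of_outer hroot hπ hV hleaf hin]
    rw [← Finset.mul_sum, hrec, if_neg (by push Not; exact hin)]
    ring

noncomputable def connectedColorings (T : Set (List (Fin N))) (π : Blocks) :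
    Finset ({V : Finset ℕ // V ∈ π} → Fin N) :=
  Finset.univ.filter fun χ =>
    WeaklyCompatible T π (extendColor π χ) ∧ components π (extendColor π χ) = {π}

theorem colorSum_eq_add_card_connectedColorings_mul {a : Blocks → ℝ} {x : ℝ} (hπ : IsNC π)
    (ih : ∀ τ ⊂ π, IsNC τ → a τ = x ^ innerCount τ) :
    colorSum T a π = colorSum T (x ^ innerCount ·) π +
      (connectedColorings T π).card * (a π - x ^ innerCount π) := by
  have hweight : ∀ χ, colorWeight T a π χ = colorWeight T (x ^ innerCount ·) π χ +
      if WeaklyCompatible T π χ ∧ components π χ = {π} then a π - x ^ innerCount π else 0 := by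
    intro χ
    unfold colorWeight
    by_cases hcompat : WeaklyCompatible T π χ
    · by_cases hconn : components π χ = {π}
      · simp [hcompat, hconn]
      · rw [if_pos hcompat, if_pos hcompat, if_neg (hconn ·.2), add_zero]
        refine Finset.prod_congr rfl fun τ hτ => ih τ ?_ (hπ.subset (subset_of_mem_components hτ))
        refine (subset_of_mem_components hτ).ssubset_of_ne ?_
        rintro rfl
        exact hconn (components_eq_singleton hτ)
    · simp [hcompat]
  simp only [colorSum, hweight, Finset.sum_add_distrib, connectedColorings, ← Finset.sum_filter,
    Finset.sum_const, nsmul_eq_mul]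

theorem card_connectedColorings_le (hroot : {j : Fin N | [j] ∈ T}.ncard = n) (hπ : IsNC π)
    (hV : V ∈ π) : (connectedColorings T π).card ≤ n := by
  rw [← hroot, ncard_setOf_eq_card_filter]
  refine Finset.card_le_card_of_injOn (· ⟨V, hV⟩) (fun χ hχ => ?_) fun χ₁ hχ₁ χ₂ hχ₂ h => ?_
  · obtain ⟨hcompat, hconn⟩ := (Finset.mem_filter.mp hχ).2
    have hred := hπ.weaklyCompatible_iff.mp hcompat V hV
    rw [red_eq_singleton (by simpa using hπ.blockChain_ne_nil hV)
      (c := extendColor π χ V) fun c hc => ?_] at hred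
    · simpa [extendColor, hV] using hred
    obtain ⟨X, hX, rfl⟩ := List.mem_map.mp hc
    exact color_eq_of_components_eq_singleton hconn hV
      ((hπ.isChainList_blockChain hV).mem_of_mem hV hX)
  · have hconst : ∀ χ ∈ connectedColorings T π, ∀ u, χ u = χ ⟨V, hV⟩ := fun χ hχ u => by
      have := color_eq_of_components_eq_singleton (Finset.mem_filter.mp hχ).2.2 hV u.2
      simpa [extendColor, u.2, hV] using this
    funext u
    rw [hconst χ₁ hχ₁ u, hconst χ₂ hχ₂ u]
    exact h

theorem card_connectedColorings_lt (hroot : {j : Fin N | [j] ∈ T}.ncard = n) (hn : 2 ≤ n)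
    (hπ : IsNC π) (hcard : π.card ≠ 1) : (connectedColorings T π).card < n ^ π.card := by
  obtain rfl | ⟨V, hV⟩ := π.eq_empty_or_nonempty
  · simp [connectedColorings, components]
  calc (connectedColorings T π).card ≤ n := card_connectedColorings_le hroot hπ hV
    _ < n ^ π.card := lt_self_pow₀ hn (by have := Finset.card_pos.mpr ⟨V, hV⟩; omega)

end CumulantCoefficients

/-- For an `(n,d)`-regular rooted tree `T` with `n ≥ 2` (the root has exactly
`n` children, every other vertex exactly `d` children), the cumulant
coefficients are `α_{T,π} = (d/(n−1))^{I(π)}`. -/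
theorem stmt13 {N : ℕ} [NeZero N] (n d : ℕ) (hn2 : 2 ≤ n)
    (T : Set (List (Fin N))) (hT : IsRootedSubtree T)
    (hroot : {j : Fin N | [j] ∈ T}.ncard = n)
    (hreg : ∀ s ∈ T, s ≠ [] → {j : Fin N | j :: s ∈ T}.ncard = d)
    (a : Blocks → ℝ) (ha : SatisfiesFP n T a) :
    ∀ π : Blocks, IsNC π →
      a π = ((d : ℝ) / ((n : ℝ) - 1)) ^ innerCount π := by
  have hn1 : (n : ℝ) - 1 ≠ 0 := by
    have : (2 : ℝ) ≤ n := by exact_mod_cast hn2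
    linarith
  have hx : (d : ℝ) / ((n : ℝ) - 1) + d = n * ((d : ℝ) / ((n : ℝ) - 1)) := by
    field_simp
    ring
  set x := (d : ℝ) / ((n : ℝ) - 1)
  intro π hπ
  induction π using Finset.strongInduction with
  | H π ih =>
  by_cases hcard : π.card = 1
  · obtain ⟨V, rfl⟩ := Finset.card_eq_one.mp hcard
    rw [ha.1 _ hπ hcard, innerCount_singleton, pow_zero]
  have hfix := ha.2 π hπ
  rw [cumulantRHS_eq_colorSum_div, colorSum_eq_add_card_connectedColorings_mul hπ ih,
    colorSum_pow_innerCount hT hroot hreg hx hπ, eq_div_iff (by positivity)] at hfix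
  have hK : ((connectedColorings T π).card : ℝ) < (n : ℝ) ^ π.card := by
    exact_mod_cast card_connectedColorings_lt hroot hn2 hπ hcard
  have hprod : (a π - x ^ innerCount π) *
      ((n : ℝ) ^ π.card - (connectedColorings T π).card) = 0 := by
    linear_combination hfix
  exact sub_eq_zero.mp ((mul_eq_zero.mp hprod).resolve_right (sub_ne_zero.mpr hK.ne'))
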